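/- Let ψ : ℕ → (0,∞) be a function satisfying: (I) there exists c > 0 such that for all n ≥ 1 and all k with n ≤ k ≤ 2n, ψ(k) = ψ(n)·(1 + O((log n)^{-c})); and (II) there exists ε > 0 such that for all n ≥ 1, ψ(2n) = ψ(n)·(1 − (log 2)/(2 log n) + O((log n)^{-1−ε})). Then, with δ = min{c, ε}, there exists a constant a > 0 such that ψ(n) = a·(log n)^{-1/2}·(1 + O((log n)^{-δ})). -/

import Mathlib

open Real

lemma aux_sqrt {t : ℝ} (h0 : 0 ≤ t) (h1 : t ≤ 1) :
    |(1 - t/2) * Real.sqrt (1+t) - 1| ≤ t^2 := by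
  have hu0 : 0 ≤ Real.sqrt (1+t) := Real.sqrt_nonneg _
  have hu : Real.sqrt (1+t) ^ 2 = 1 + t := Real.sq_sqrt (by linarith)
  have hfac : 0 ≤ 1 - t/2 := by linarith
  rw [abs_le]
  constructor
  · nlinarith [sq_nonneg (Real.sqrt (1+t) - 1), sq_nonneg ((1 - t/2) * Real.sqrt (1+t) - (1 - t^2)), sq_nonneg t, mul_nonneg hfac hu0]
  · nlinarith [sq_nonneg ((1 - t/2) * Real.sqrt (1+t) - 1), mul_nonneg hfac hu0, sq_nonneg t]

lemma aux_log1p {θ : ℝ} (h : |θ| ≤ 1/2) : |Real.log (1+θ)| ≤ 2*|θ| := by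
  have h1 : -(1/2) ≤ θ := (abs_le.mp h).1
  have h2 : θ ≤ 1/2 := (abs_le.mp h).2
  have hp : (0:ℝ) < 1 + θ := by linarith
  have hup : Real.log (1+θ) ≤ θ := by
    have := Real.log_le_sub_one_of_pos hp; linarith
  have hinv : Real.log (1+θ)⁻¹ ≤ (1+θ)⁻¹ - 1 := Real.log_le_sub_one_of_pos (by positivity)
  have hlog_inv : Real.log (1+θ)⁻¹ = -Real.log (1+θ) := Real.log_inv _
  have hlow : θ / (1+θ) ≤ Real.log (1+θ) := by
    rw [hlog_inv] at hinv
    have hb : (1+θ)⁻¹ - 1 = -(θ / (1+θ)) := by field_simp; ring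
    rw [hb] at hinv
    linarith
  rw [abs_le]
  refine ⟨?_, ?_⟩
  · have key : -(2*|θ|) ≤ θ / (1+θ) := by
      rcases abs_cases θ with ⟨he, hθ0⟩ | ⟨he, hθ0⟩
      · rw [he, le_div_iff₀ hp]; nlinarith
      · rw [he, le_div_iff₀ hp]; nlinarith
    linarith
  · calc Real.log (1+θ) ≤ θ := hup
      _ ≤ |θ| := le_abs_self θ
      _ ≤ 2*|θ| := by nlinarith [abs_nonneg θ]

lemma aux_expm1 {y : ℝ} (h : |y| ≤ 1/2) : |Real.exp y - 1| ≤ 2*|y| := by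
  have h1 : -(1/2) ≤ y := (abs_le.mp h).1
  have h2 : y ≤ 1/2 := (abs_le.mp h).2
  rw [abs_le]
  constructor
  · have := Real.add_one_le_exp y
    rcases abs_cases y with ⟨he, _⟩ | ⟨he, _⟩ <;> nlinarith
  · have hy1 : (0:ℝ) < 1 - y := by linarith
    have hneg : 1 - y ≤ Real.exp (-y) := by
      have := Real.add_one_le_exp (-y); linarith
    have hup : Real.exp y ≤ (1 - y)⁻¹ := by
      have hinv : (Real.exp (-y))⁻¹ ≤ (1 - y)⁻¹ := by
        apply inv_anti₀ hy1 hneg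
      rwa [Real.exp_neg, inv_inv] at hinv
    have key : (1-y)⁻¹ - 1 ≤ 2*|y| := by
      have hb : (1-y)⁻¹ - 1 = y / (1-y) := by field_simp; ring
      rw [hb]
      rcases abs_cases y with ⟨he, hθ0⟩ | ⟨he, hθ0⟩
      · rw [he, div_le_iff₀ hy1]; nlinarith
      · rw [he, div_le_iff₀ hy1]; nlinarith
    linarith

lemma aux_telescope {x s : ℝ} (hx : 1 ≤ x) (hs : 0 < s) :
    (x+1) ^ (-(1:ℝ)-s) ≤ (1/s) * (x ^ (-s) - (x+1) ^ (-s)) := by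
  have hx0 : (0:ℝ) < x := by linarith
  have hx1 : (0:ℝ) < x + 1 := by linarith
  have hlog : 1/(x+1) ≤ Real.log ((x+1)/x) := by
    have hinv : Real.log (x/(x+1)) ≤ x/(x+1) - 1 := Real.log_le_sub_one_of_pos (by positivity)
    have heq : Real.log (x/(x+1)) = -Real.log ((x+1)/x) := by
      rw [← Real.log_inv]; congr 1; field_simp
    have hb : x/(x+1) - 1 = -(1/(x+1)) := by field_simp; ring
    rw [heq, hb] at hinv
    linarith
  have hexp : (1:ℝ) + s * (1/(x+1)) ≤ ((x+1)/x) ^ s := by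
    rw [Real.rpow_def_of_pos (by positivity)]
    calc (1:ℝ) + s * (1/(x+1)) ≤ 1 + Real.log ((x+1)/x) * s := by
          nlinarith [hlog, hs.le]
      _ ≤ Real.exp (Real.log ((x+1)/x) * s) := by
          have := Real.add_one_le_exp (Real.log ((x+1)/x) * s); linarith
  have hkey : s * ((x+1)^(-(1:ℝ)) * (x+1)^(-s)) ≤ x ^ (-s) - (x+1) ^ (-s) := by
    have hdiv : ((x+1)/x) ^ s = (x+1)^s / x^s := Real.div_rpow (by positivity) hx0.le s
    have hxs : (0:ℝ) < x ^ s := Real.rpow_pos_of_pos hx0 s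
    have hx1s : (0:ℝ) < (x+1) ^ s := Real.rpow_pos_of_pos hx1 s
    have h2 : (1 + s * (1/(x+1))) * x^s ≤ (x+1)^s := by
      rw [hdiv] at hexp
      exact (le_div_iff₀ hxs).mp hexp
    have hxneg : x ^ (-s) = (x^s)⁻¹ := Real.rpow_neg hx0.le s
    have hx1neg : (x+1) ^ (-s) = ((x+1)^s)⁻¹ := Real.rpow_neg hx1.le s
    have hx1neg1 : (x+1) ^ (-(1:ℝ)) = (x+1)⁻¹ := by
      rw [Real.rpow_neg hx1.le, Real.rpow_one]
    rw [hxneg, hx1neg, hx1neg1]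
    have hpos : (0:ℝ) < x^s * (x+1)^s := by positivity
    apply le_of_mul_le_mul_right _ hpos
    have e1 : s * ((x+1)⁻¹ * ((x+1)^s)⁻¹) * (x^s * (x+1)^s) = s * (1/(x+1)) * x^s := by
      field_simp; try ring
    have e2 : ((x^s)⁻¹ - ((x+1)^s)⁻¹) * (x^s * (x+1)^s) = (x+1)^s - x^s := by
      field_simp; try ring
    rw [e1, e2]
    nlinarith [h2, hxs.le, hs.le, hx1]
  have hsplit : (x+1) ^ (-(1:ℝ)-s) = (x+1)^(-(1:ℝ)) * (x+1)^(-s) := by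
    have he : (-(1:ℝ)-s) = (-(1:ℝ)) + (-s) := by ring
    rw [he, Real.rpow_add hx1]
  rw [hsplit]
  rw [← mul_le_mul_iff_right₀ hs]
  calc s * ((x+1)^(-(1:ℝ)) * (x+1)^(-s)) ≤ x ^ (-s) - (x+1) ^ (-s) := hkey
    _ = s * (1/s * (x ^ (-s) - (x+1) ^ (-s))) := by field_simp

lemma aux_sum {s : ℝ} (hs0 : 0 < s) (hs1 : s ≤ 1) (J m : ℕ) (hJ : 1 ≤ J) :
    ∑ j ∈ Finset.Ico J m, ((j:ℝ)+1)^(-(1:ℝ)-s) ≤ (2/s) * ((J:ℝ)+1)^(-s) := by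
  have hJ0 : (0:ℝ) < J := by exact_mod_cast hJ
  have hJ1 : (1:ℝ) ≤ (J:ℝ) := by exact_mod_cast hJ
  have claim : ∀ m, J ≤ m → ∑ j ∈ Finset.Ico J m, ((j:ℝ)+1)^(-(1:ℝ)-s) ≤
      (1/s) * ((J:ℝ)^(-s) - (m:ℝ)^(-s)) := by
    intro m hm
    induction m with
    | zero => omega
    | succ k ih =>
      rcases Nat.lt_or_ge J (k+1) with hlt | hge
      · have hJk : J ≤ k := by omega
        rw [Finset.sum_Ico_succ_top hJk]
        have hk1 : (1:ℝ) ≤ (k:ℝ) := by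
          have : 1 ≤ k := le_trans hJ hJk
          exact_mod_cast this
        have htel := aux_telescope hk1 hs0
        have := ih hJk
        push_cast
        push_cast at this htel
        linarith
      · have hJk : J = k + 1 := by omega
        subst hJk
        simp
  have hgoal2 : (1/s) * (J:ℝ)^(-s) ≤ (2/s) * ((J:ℝ)+1)^(-s) := by
    have hmono : ((2:ℝ)*J) ^ (-s) ≤ ((J:ℝ)+1) ^ (-s) :=
      Real.rpow_le_rpow_of_nonpos (by positivity) (by linarith [hJ1]) (by linarith)
    have hmul : ((2:ℝ)*J) ^ (-s) = (2:ℝ)^(-s) * (J:ℝ)^(-s) :=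
      Real.mul_rpow (by norm_num) (Nat.cast_nonneg J)
    have hhalf : (1:ℝ)/2 ≤ (2:ℝ)^(-s) := by
      calc (1:ℝ)/2 = (2:ℝ)^(-(1:ℝ)) := by
            rw [Real.rpow_neg (by norm_num), Real.rpow_one]; norm_num
        _ ≤ (2:ℝ)^(-s) :=
            Real.rpow_le_rpow_of_exponent_le (by norm_num) (by linarith)
    have hJs : (0:ℝ) ≤ (J:ℝ)^(-s) := Real.rpow_nonneg hJ0.le _
    have hss : (0:ℝ) < 1/s := by positivity
    have hkey : (J:ℝ)^(-s) ≤ 2 * ((J:ℝ)+1)^(-s) := by nlinarith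
    calc (1/s) * (J:ℝ)^(-s) ≤ (1/s) * (2 * ((J:ℝ)+1)^(-s)) := by
          apply mul_le_mul_of_nonneg_left hkey hss.le
      _ = (2/s) * ((J:ℝ)+1)^(-s) := by ring
  rcases Nat.lt_or_ge m J with hlt | hge
  · rw [Finset.Ico_eq_empty (by omega)]
    simp only [Finset.sum_empty]
    calc (0:ℝ) ≤ (1/s) * (J:ℝ)^(-s) := by positivity
      _ ≤ (2/s) * ((J:ℝ)+1)^(-s) := hgoal2
  · have h1 := claim m hge
    have hm0 : (0:ℝ) ≤ (m:ℝ)^(-s) := Real.rpow_nonneg (Nat.cast_nonneg m) _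
    have hss : (0:ℝ) < 1/s := by positivity
    have h2 : ∑ j ∈ Finset.Ico J m, ((j:ℝ)+1)^(-(1:ℝ)-s) ≤ (1/s) * (J:ℝ)^(-s) := by
      nlinarith
    linarith

lemma aux_summable {s : ℝ} (hs : 0 < s) :
    Summable (fun j : ℕ => ((j:ℝ)+1) ^ (-(1:ℝ)-s)) := by
  have h : Summable (fun n : ℕ => (n:ℝ) ^ (-(1:ℝ)-s)) :=
    summable_nat_rpow.mpr (by linarith)
  have h2 := (summable_nat_add_iff 1).mpr h
  refine h2.congr fun n => ?_
  push_cast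
  ring_nf


lemma aux_diff_inv {u v b : ℝ} (hu1 : 1 ≤ u) (huv : u ≤ v) (hv2u : v ≤ 2*u)
    (hb : 0 < b) (hdiff : v^2 - u^2 ≤ b) : u⁻¹ - v⁻¹ ≤ 2*b * (v⁻¹ * (v^2)⁻¹) := by
  have hu0 : (0:ℝ) < u := by linarith
  have hv0 : (0:ℝ) < v := by linarith
  have key : v^3 - u*v^2 ≤ 2*b*u := by
    nlinarith [mul_le_mul_of_nonneg_left hdiff (sq_nonneg v),
      mul_le_mul_of_nonneg_right hv2u hv0.le, mul_pos hu0 hv0, hb.le,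
      mul_nonneg (mul_nonneg hb.le hu0.le) hu0.le]
  have hfrac : u⁻¹ - v⁻¹ = (v-u)/(u*v) := by field_simp
  have hrhs : 2*b * (v⁻¹ * (v^2)⁻¹) = 2*b/(v^3) := by
    field_simp
  rw [hfrac, hrhs, div_le_div_iff₀ (by positivity) (by positivity)]
  nlinarith [mul_le_mul_of_nonneg_right key hv0.le]


set_option maxHeartbeats 1000000 in
/-- Condition (I)+(II) for the slowly varying correction function `ψ` imply the sharp
asymptotics `ψ(n) = a (log n)^{-1/2} (1 + O((log n)^{-δ}))` with `δ = min c ε`. -/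
theorem stmt0 (ψ : ℕ → ℝ) (hpos : ∀ n, 0 < ψ n)
    (c : ℝ) (hc : 0 < c)
    (hI : ∃ C : ℝ, 0 < C ∧ ∃ N : ℕ, ∀ n : ℕ, N ≤ n → ∀ k : ℕ, n ≤ k → k ≤ 2 * n →
      |ψ k - ψ n| ≤ C * ψ n * (Real.log n) ^ (-c))
    (ε : ℝ) (hε : 0 < ε)
    (hII : ∃ C : ℝ, 0 < C ∧ ∃ N : ℕ, ∀ n : ℕ, N ≤ n →
      |ψ (2 * n) - ψ n * (1 - Real.log 2 / (2 * Real.log n))| ≤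
        C * ψ n * (Real.log n) ^ (-1 - ε)) :
    ∃ a : ℝ, 0 < a ∧ ∃ C : ℝ, 0 < C ∧ ∃ N : ℕ, ∀ n : ℕ, N ≤ n →
      |ψ n - a * (Real.log n) ^ (-(1:ℝ)/2)| ≤
        C * (Real.log n) ^ (-(1:ℝ)/2) * (Real.log n) ^ (-(min c ε)) := by
  obtain ⟨C₁, hC₁, N₁, hI⟩ := hI
  obtain ⟨C₂, hC₂, N₂, hII⟩ := hII
  have hβ0 : (0:ℝ) < Real.log 2 := Real.log_pos (by norm_num)
  have hβ1 : Real.log 2 < 1 := by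
    have := Real.log_two_lt_d9; linarith
  have hβsq : (Real.log 2)^2 ≤ 1 := by nlinarith [Real.log_pos (show (1:ℝ) < 2 by norm_num), Real.log_two_lt_d9]
  by_cases hc1 : c ≤ 1
  swap
  · -- contradiction branch : c > 1 makes (I)+(II) inconsistent
    push_neg at hc1
    exfalso
    set β := Real.log 2 with hβdef
    set R : ℝ := max 1 (max ((8*C₁/β) ^ (c-1)⁻¹) ((8*C₂/β) ^ ε⁻¹)) with hRdef
    have hR1 : (1:ℝ) ≤ R := le_max_left _ _
    have hR0 : (0:ℝ) < R := by linarith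
    set n : ℕ := max (max N₁ N₂) (max 1 ⌈Real.exp R⌉₊) with hndef
    have hn1 : 1 ≤ n := le_trans (le_max_left 1 _) (le_max_right _ _)
    have hncast : Real.exp R ≤ (n:ℝ) := by
      have h1 : (⌈Real.exp R⌉₊ : ℝ) ≤ (n:ℝ) := by
        have : ⌈Real.exp R⌉₊ ≤ n := le_trans (le_max_right 1 _) (le_max_right _ _)
        exact_mod_cast this
      exact le_trans (Nat.le_ceil _) h1
    set L : ℝ := Real.log n with hLdef
    have hRL : R ≤ L := by
      calc R = Real.log (Real.exp R) := (Real.log_exp R).symm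
        _ ≤ L := Real.log_le_log (Real.exp_pos R) hncast
    have hL1 : (1:ℝ) ≤ L := le_trans hR1 hRL
    have hL0 : (0:ℝ) < L := by linarith
    have hψ : (0:ℝ) < ψ n := hpos n
    have e1 := hI n (le_trans (le_max_left _ _) (le_max_left _ _)) (2*n)
      (by omega) (le_refl _)
    have e2 := hII n (le_trans (le_max_right _ _) (le_max_left _ _))
    -- β/(2L) ≤ C₁ L^{-c} + C₂ L^{-1-ε}
    have key : β/(2*L) ≤ C₁ * L ^ (-c) + C₂ * L ^ (-1-ε) := by
      have tri : ψ n * (β/(2*L)) ≤ |ψ (2*n) - ψ n| +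
          |ψ (2*n) - ψ n * (1 - β / (2 * L))| := by
        have hid : ψ n * (β/(2*L)) = |(ψ (2*n) - ψ n * (1 - β / (2 * L))) - (ψ (2*n) - ψ n)| := by
          rw [show (ψ (2*n) - ψ n * (1 - β / (2 * L))) - (ψ (2*n) - ψ n) = ψ n * (β/(2*L)) by ring]
          rw [abs_of_pos (by positivity)]
        rw [hid]
        calc |(ψ (2*n) - ψ n * (1 - β / (2 * L))) - (ψ (2*n) - ψ n)| ≤
            |ψ (2*n) - ψ n * (1 - β / (2 * L))| + |ψ (2*n) - ψ n| := abs_sub _ _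
          _ = |ψ (2*n) - ψ n| + |ψ (2*n) - ψ n * (1 - β / (2 * L))| := by ring
      have sum : |ψ (2*n) - ψ n| + |ψ (2*n) - ψ n * (1 - β / (2 * L))| ≤
          C₁ * ψ n * L ^ (-c) + C₂ * ψ n * L ^ (-1-ε) := by
        exact add_le_add e1 e2
      have := le_trans tri sum
      have hfin : ψ n * (β/(2*L)) ≤ ψ n * (C₁ * L ^ (-c) + C₂ * L ^ (-1-ε)) := by
        calc ψ n * (β/(2*L)) ≤ C₁ * ψ n * L ^ (-c) + C₂ * ψ n * L ^ (-1-ε) := this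
          _ = ψ n * (C₁ * L ^ (-c) + C₂ * L ^ (-1-ε)) := by ring
      exact le_of_mul_le_mul_left (by linarith [hfin]) hψ
    -- multiply by L
    have key2 : β/2 ≤ C₁ * L ^ (1-c) + C₂ * L ^ (-ε) := by
      have hm := mul_le_mul_of_nonneg_left key hL0.le
      have hLc : L * L ^ (-c) = L ^ (1-c) := by
        rw [show (1:ℝ)-c = 1 + (-c) by ring, Real.rpow_add hL0, Real.rpow_one]
      have hLe : L * L ^ (-1-ε) = L ^ (-ε) := by
        rw [show -ε = 1 + (-1-ε) by ring, Real.rpow_add hL0, Real.rpow_one]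
      have hlhs : L * (β/(2*L)) = β/2 := by field_simp
      calc β/2 = L * (β/(2*L)) := hlhs.symm
        _ ≤ L * (C₁ * L ^ (-c) + C₂ * L ^ (-1-ε)) := hm
        _ = C₁ * (L * L ^ (-c)) + C₂ * (L * L ^ (-1-ε)) := by ring
        _ = C₁ * L ^ (1-c) + C₂ * L ^ (-ε) := by rw [hLc, hLe]
    -- bound the RHS by β/4
    have hb1 : C₁ * L ^ (1-c) ≤ β/8 := by
      have hq : (0:ℝ) ≤ 8*C₁/β := by positivity
      have hRq : (8*C₁/β) ^ (c-1)⁻¹ ≤ R := le_trans (le_max_left _ _) (le_max_right _ _)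
      have hRpow : 8*C₁/β ≤ R ^ (c-1) := by
        calc 8*C₁/β = ((8*C₁/β) ^ (c-1)⁻¹) ^ (c-1) :=
              (Real.rpow_inv_rpow hq (by linarith)).symm
          _ ≤ R ^ (c-1) := Real.rpow_le_rpow (Real.rpow_nonneg hq _) hRq (by linarith)
      have hLR : L ^ (1-c) ≤ R ^ (1-c) :=
        Real.rpow_le_rpow_of_nonpos hR0 hRL (by linarith)
      have hRinv : R ^ (1-c) = (R ^ (c-1))⁻¹ := by
        rw [show (1:ℝ)-c = -(c-1) by ring, Real.rpow_neg hR0.le]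
      have hRc0 : (0:ℝ) < R ^ (c-1) := Real.rpow_pos_of_pos hR0 _
      have h8 : (0:ℝ) < 8*C₁/β := by positivity
      have : (R ^ (c-1))⁻¹ ≤ (8*C₁/β)⁻¹ := inv_anti₀ h8 hRpow
      have hβC : (8*C₁/β)⁻¹ = β/(8*C₁) := by field_simp
      calc C₁ * L ^ (1-c) ≤ C₁ * R ^ (1-c) := by
            apply mul_le_mul_of_nonneg_left hLR hC₁.le
        _ = C₁ * (R ^ (c-1))⁻¹ := by rw [hRinv]
        _ ≤ C₁ * (β/(8*C₁)) := by
            apply mul_le_mul_of_nonneg_left _ hC₁.le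
            rw [← hβC]; exact this
        _ = β/8 := by field_simp
    have hb2 : C₂ * L ^ (-ε) ≤ β/8 := by
      have hq : (0:ℝ) ≤ 8*C₂/β := by positivity
      have hRq : (8*C₂/β) ^ ε⁻¹ ≤ R := le_trans (le_max_right _ _) (le_max_right _ _)
      have hRpow : 8*C₂/β ≤ R ^ ε := by
        calc 8*C₂/β = ((8*C₂/β) ^ ε⁻¹) ^ ε :=
              (Real.rpow_inv_rpow hq (by linarith)).symm
          _ ≤ R ^ ε := Real.rpow_le_rpow (Real.rpow_nonneg hq _) hRq hε.le
      have hLR : L ^ (-ε) ≤ R ^ (-ε) :=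
        Real.rpow_le_rpow_of_nonpos hR0 hRL (by linarith)
      have hRinv : R ^ (-ε) = (R ^ ε)⁻¹ := Real.rpow_neg hR0.le ε
      have h8 : (0:ℝ) < 8*C₂/β := by positivity
      have : (R ^ ε)⁻¹ ≤ (8*C₂/β)⁻¹ := inv_anti₀ h8 hRpow
      have hβC : (8*C₂/β)⁻¹ = β/(8*C₂) := by field_simp
      calc C₂ * L ^ (-ε) ≤ C₂ * R ^ (-ε) := by
            apply mul_le_mul_of_nonneg_left hLR hC₂.le
        _ = C₂ * (R ^ ε)⁻¹ := by rw [hRinv]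
        _ ≤ C₂ * (β/(8*C₂)) := by
            apply mul_le_mul_of_nonneg_left _ hC₂.le
            rw [← hβC]; exact this
        _ = β/8 := by field_simp
    linarith
  · -- main branch
    set β := Real.log 2 with hβdef
    set s := min ε 1 with hsdef
    have hs0 : 0 < s := lt_min hε one_pos
    have hs1 : s ≤ 1 := min_le_right _ _
    have hsε : s ≤ ε := min_le_left _ _
    set δ := min c ε with hδdef
    have hδ0 : 0 < δ := lt_min hc hε
    have hδc : δ ≤ c := min_le_left _ _
    have hδs : δ ≤ s := le_min (min_le_right _ _) (le_trans (min_le_left _ _) hc1)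
    have hδ1 : δ ≤ 1 := le_trans hδc hc1
    set K := 2*C₂ + 1 with hKdef
    have hK1 : (1:ℝ) ≤ K := by simp only [hKdef]; linarith
    have hK0 : (0:ℝ) < K := by linarith
    set n₀ : ℕ := max (max N₁ N₂) ⌈Real.exp (2*K+3)⌉₊ with hn₀def
    have hn₀cast : Real.exp (2*K+3) ≤ (n₀:ℝ) := by
      have h1 : (⌈Real.exp (2*K+3)⌉₊ : ℝ) ≤ (n₀:ℝ) := by
        exact_mod_cast (le_max_right _ _ : ⌈Real.exp (2*K+3)⌉₊ ≤ n₀)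
      exact le_trans (Nat.le_ceil _) h1
    have hn₀R : (0:ℝ) < (n₀:ℝ) := lt_of_lt_of_le (Real.exp_pos _) hn₀cast
    have hn₀1 : 1 ≤ n₀ := by exact_mod_cast Nat.one_le_iff_ne_zero.mpr (by
      intro h0; rw [h0] at hn₀R; simp at hn₀R)
    set L₀ := Real.log n₀ with hL₀def
    have hL₀ : 2*K+3 ≤ L₀ := by
      calc 2*K+3 = Real.log (Real.exp (2*K+3)) := (Real.log_exp _).symm
        _ ≤ L₀ := Real.log_le_log (Real.exp_pos _) hn₀cast
    have hL₀3 : (3:ℝ) ≤ L₀ := by linarith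
    have hL₀1 : (1:ℝ) ≤ L₀ := by linarith
    -- the dyadic sequence
    set nn : ℕ → ℕ := fun j => n₀ * 2^j with hnn
    have hnn_ge : ∀ j, n₀ ≤ nn j := by
      intro j
      calc n₀ = n₀ * 1 := (mul_one n₀).symm
        _ ≤ n₀ * 2^j := Nat.mul_le_mul_left n₀ (Nat.one_le_two_pow)
    have hnn_pos : ∀ j, 0 < nn j := fun j => lt_of_lt_of_le hn₀1 (hnn_ge j)
    have hnn_succ : ∀ j, nn (j+1) = 2 * nn j := by
      intro j; simp only [hnn]; rw [pow_succ]; ring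
    set LL : ℕ → ℝ := fun j => Real.log (nn j) with hLL
    have hLL_eq : ∀ j, LL j = L₀ + j*β := by
      intro j
      simp only [hLL, hnn, hL₀def, hβdef]
      push_cast
      rw [Real.log_mul (by positivity) (by positivity), Real.log_pow]
    have hLL_ge : ∀ j, L₀ ≤ LL j := by
      intro j; rw [hLL_eq]; have : (0:ℝ) ≤ (j:ℝ)*β := by positivity
      linarith
    have hLL1 : ∀ j, (1:ℝ) ≤ LL j := fun j => le_trans hL₀1 (hLL_ge j)
    have hLL0 : ∀ j, (0:ℝ) < LL j := fun j => lt_of_lt_of_le one_pos (hLL1 j)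
    have hLL_lb : ∀ j : ℕ, ((j:ℝ)+1)*β ≤ LL j := by
      intro j; rw [hLL_eq]
      have hβL : β ≤ L₀ := by linarith
      have hexp : ((j:ℝ)+1)*β = (j:ℝ)*β + β := by ring
      rw [hexp]
      linarith
    have hLL_succ : ∀ j, LL (j+1) = LL j + β := by
      intro j; rw [hLL_eq, hLL_eq]; push_cast; ring
    set g : ℕ → ℝ := fun j => ψ (nn j) * Real.sqrt (LL j) with hg
    have hg_pos : ∀ j, 0 < g j :=
      fun j => mul_pos (hpos _) (Real.sqrt_pos.mpr (hLL0 j))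
    set h : ℕ → ℝ := fun j => Real.log (g j) with hh
    -- Step A : ratio estimate
    have ratio : ∀ j, |g (j+1) - g j| ≤ K * (g j * (LL j) ^ (-(1:ℝ)-s)) := by
      intro j
      have hLm1 : (1:ℝ) ≤ LL j := hLL1 j
      have hLm0 : (0:ℝ) < LL j := hLL0 j
      set t := β / LL j with htdef
      have ht0 : 0 < t := by positivity
      have ht1 : t ≤ 1 := by
        rw [htdef, div_le_one hLm0]; linarith
      have hsum_eq : LL j + β = LL j * (1+t) := by
        rw [htdef]; field_simp
      have hsqrt : Real.sqrt (LL j + β) = Real.sqrt (LL j) * Real.sqrt (1+t) := by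
        rw [hsum_eq, Real.sqrt_mul hLm0.le]
      have hN₂ : N₂ ≤ nn j := le_trans (le_trans (le_max_right _ _) (le_max_left _ _)) (hnn_ge j)
      have e2 := hII (nn j) hN₂
      have ht2 : β / (2 * LL j) = t/2 := by rw [htdef]; ring
      have hgj1 : g (j+1) = ψ (2 * nn j) * Real.sqrt (LL j + β) := by
        simp only [hg]
        rw [hnn_succ j, ← hLL_succ j]
      have hdecomp : g (j+1) - g j =
          (ψ (2 * nn j) - ψ (nn j) * (1 - β / (2 * Real.log (nn j)))) * Real.sqrt (LL j + β)
          + (ψ (nn j) * Real.sqrt (LL j)) * ((1 - t/2) * Real.sqrt (1+t) - 1) := by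
        have hlog_eq : Real.log ((nn j : ℕ) : ℝ) = LL j := rfl
        rw [hlog_eq, ht2, hgj1, hsqrt]
        simp only [hg]
        ring
      have hsq := aux_sqrt ht0.le ht1
      have hsqrt2 : Real.sqrt (1+t) ≤ 2 := by
        have h4 : Real.sqrt (1+t) ≤ Real.sqrt 4 := Real.sqrt_le_sqrt (by linarith)
        rwa [show (4:ℝ) = 2^2 by norm_num, Real.sqrt_sq (by norm_num)] at h4
      have hψm : (0:ℝ) < ψ (nn j) := hpos _
      have hsm : (0:ℝ) ≤ Real.sqrt (LL j) := Real.sqrt_nonneg _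
      have hrp1 : (LL j) ^ (-1-ε) ≤ (LL j) ^ (-(1:ℝ)-s) :=
        Real.rpow_le_rpow_of_exponent_le hLm1 (by linarith)
      have hrp2 : t^2 ≤ (LL j) ^ (-(1:ℝ)-s) := by
        have h2a : t^2 = β^2 * ((LL j)^2)⁻¹ := by
          rw [htdef]; field_simp
        have h2b : (LL j) ^ (-(2:ℝ)) = ((LL j)^2)⁻¹ := by
          rw [show (-(2:ℝ)) = -((2:ℕ):ℝ) by norm_num, Real.rpow_neg hLm0.le, Real.rpow_natCast]
        have h2c : (LL j) ^ (-(2:ℝ)) ≤ (LL j) ^ (-(1:ℝ)-s) :=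
          Real.rpow_le_rpow_of_exponent_le hLm1 (by linarith)
        have hβ2 : β^2 ≤ 1 := hβsq
        have hpos2 : (0:ℝ) ≤ ((LL j)^2)⁻¹ := by positivity
        calc t^2 = β^2 * ((LL j)^2)⁻¹ := h2a
          _ ≤ 1 * ((LL j)^2)⁻¹ := by apply mul_le_mul_of_nonneg_right hβ2 hpos2
          _ = ((LL j)^2)⁻¹ := one_mul _
          _ = (LL j) ^ (-(2:ℝ)) := h2b.symm
          _ ≤ (LL j) ^ (-(1:ℝ)-s) := h2c
      have habs : |g (j+1) - g j| ≤
          (C₂ * ψ (nn j) * (LL j) ^ (-1-ε)) * (Real.sqrt (LL j) * 2)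
          + (ψ (nn j) * Real.sqrt (LL j)) * t^2 := by
        rw [hdecomp]
        calc |(ψ (2 * nn j) - ψ (nn j) * (1 - β / (2 * Real.log (nn j)))) * Real.sqrt (LL j + β)
            + (ψ (nn j) * Real.sqrt (LL j)) * ((1 - t/2) * Real.sqrt (1+t) - 1)|
            ≤ |(ψ (2 * nn j) - ψ (nn j) * (1 - β / (2 * Real.log (nn j)))) * Real.sqrt (LL j + β)|
            + |(ψ (nn j) * Real.sqrt (LL j)) * ((1 - t/2) * Real.sqrt (1+t) - 1)| := abs_add_le _ _
          _ ≤ (C₂ * ψ (nn j) * (LL j) ^ (-1-ε)) * (Real.sqrt (LL j) * 2)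
            + (ψ (nn j) * Real.sqrt (LL j)) * t^2 := by
              apply add_le_add
              · rw [abs_mul]
                apply mul_le_mul e2 _ (abs_nonneg _) (by positivity)
                rw [abs_of_nonneg (Real.sqrt_nonneg _), hsqrt]
                apply mul_le_mul_of_nonneg_left hsqrt2 hsm
              · rw [abs_mul, abs_of_nonneg (by positivity : (0:ℝ) ≤ ψ (nn j) * Real.sqrt (LL j))]
                apply mul_le_mul_of_nonneg_left hsq (by positivity)
      calc |g (j+1) - g j| ≤
          (C₂ * ψ (nn j) * (LL j) ^ (-1-ε)) * (Real.sqrt (LL j) * 2)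
          + (ψ (nn j) * Real.sqrt (LL j)) * t^2 := habs
        _ ≤ (C₂ * ψ (nn j) * (LL j) ^ (-(1:ℝ)-s)) * (Real.sqrt (LL j) * 2)
          + (ψ (nn j) * Real.sqrt (LL j)) * (LL j) ^ (-(1:ℝ)-s) := by
            apply add_le_add
            · apply mul_le_mul_of_nonneg_right _ (by positivity)
              apply mul_le_mul_of_nonneg_left hrp1 (by positivity)
            · apply mul_le_mul_of_nonneg_left hrp2 (by positivity)
        _ = (2*C₂ + 1) * (ψ (nn j) * Real.sqrt (LL j) * (LL j) ^ (-(1:ℝ)-s)) := by ring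
        _ = K * (g j * (LL j) ^ (-(1:ℝ)-s)) := by simp only [hKdef, hg]
    -- Step B : increments of h
    have hsmall : ∀ j, K * (LL j)^(-(1:ℝ)-s) ≤ 1/2 := by
      intro j
      have h1 : (LL j)^(-(1:ℝ)-s) ≤ (LL j)^(-(1:ℝ)) :=
        Real.rpow_le_rpow_of_exponent_le (hLL1 j) (by linarith)
      have h2 : (LL j)^(-(1:ℝ)) = (LL j)⁻¹ := Real.rpow_neg_one _
      have h3 : (LL j)⁻¹ ≤ (2*K+3)⁻¹ :=
        inv_anti₀ (by linarith) (le_trans hL₀ (hLL_ge j))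
      have h4 : K * (2*K+3)⁻¹ ≤ 1/2 := by
        rw [← div_eq_mul_inv, div_le_iff₀ (by linarith)]; linarith
      calc K * (LL j)^(-(1:ℝ)-s) ≤ K * (LL j)⁻¹ := by
            apply mul_le_mul_of_nonneg_left _ hK0.le
            rw [← h2]; exact h1
        _ ≤ K * (2*K+3)⁻¹ := mul_le_mul_of_nonneg_left h3 hK0.le
        _ ≤ 1/2 := h4
    have hθstep : ∀ j, |h (j+1) - h j| ≤ 2*K*((LL j)^(-(1:ℝ)-s)) := by
      intro j
      set θ := (g (j+1) - g j)/(g j) with hθdef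
      have hθb : |θ| ≤ K * (LL j)^(-(1:ℝ)-s) := by
        rw [hθdef, abs_div, abs_of_pos (hg_pos j), div_le_iff₀ (hg_pos j)]
        calc |g (j+1) - g j| ≤ K * (g j * (LL j) ^ (-(1:ℝ)-s)) := ratio j
          _ = K * (LL j) ^ (-(1:ℝ)-s) * g j := by ring
      have hθhalf : |θ| ≤ 1/2 := le_trans hθb (hsmall j)
      have h1θ : (0:ℝ) < 1 + θ := by
        have := (abs_le.mp hθhalf).1; linarith
      have hgj1 : g (j+1) = g j * (1+θ) := by
        rw [hθdef]; field_simp [ne_of_gt (hg_pos j)]; ring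
      have hdiff : h (j+1) - h j = Real.log (1+θ) := by
        simp only [hh]
        rw [hgj1, Real.log_mul (ne_of_gt (hg_pos j)) (ne_of_gt h1θ)]
        ring
      rw [hdiff]
      calc |Real.log (1+θ)| ≤ 2*|θ| := aux_log1p hθhalf
        _ ≤ 2*(K * (LL j)^(-(1:ℝ)-s)) := by linarith [hθb]
        _ = 2*K*((LL j)^(-(1:ℝ)-s)) := by ring
    set M := 2*K*(β^2)⁻¹ with hMdef
    have hM0 : (0:ℝ) < M := by positivity
    have hstep : ∀ j, |h (j+1) - h j| ≤ M * ((j:ℝ)+1)^(-(1:ℝ)-s) := by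
      intro j
      have hb1 : (LL j)^(-(1:ℝ)-s) ≤ (((j:ℝ)+1)*β)^(-(1:ℝ)-s) :=
        Real.rpow_le_rpow_of_nonpos (by positivity) (hLL_lb j) (by linarith)
      have hb2 : (((j:ℝ)+1)*β)^(-(1:ℝ)-s) = ((j:ℝ)+1)^(-(1:ℝ)-s) * β^(-(1:ℝ)-s) :=
        Real.mul_rpow (by positivity) hβ0.le
      have hb3 : β^(-(1:ℝ)-s) ≤ β^(-(2:ℝ)) :=
        Real.rpow_le_rpow_of_exponent_ge hβ0 hβ1.le (by linarith)
      have hb4 : β^(-(2:ℝ)) = (β^2)⁻¹ := by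
        rw [show (-(2:ℝ)) = -((2:ℕ):ℝ) by norm_num, Real.rpow_neg hβ0.le, Real.rpow_natCast]
      calc |h (j+1) - h j| ≤ 2*K*((LL j)^(-(1:ℝ)-s)) := hθstep j
        _ ≤ 2*K*(((j:ℝ)+1)^(-(1:ℝ)-s) * β^(-(1:ℝ)-s)) := by
            rw [← hb2]
            apply mul_le_mul_of_nonneg_left hb1 (by positivity)
        _ ≤ 2*K*(((j:ℝ)+1)^(-(1:ℝ)-s) * (β^2)⁻¹) := by
            apply mul_le_mul_of_nonneg_left _ (by positivity)
            apply mul_le_mul_of_nonneg_left _ (by positivity)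
            rw [← hb4]; exact hb3
        _ = M * ((j:ℝ)+1)^(-(1:ℝ)-s) := by rw [hMdef]; ring
    -- Step C : convergence
    have hsummable : Summable (fun j : ℕ => M * ((j:ℝ)+1)^(-(1:ℝ)-s)) :=
      (aux_summable hs0).mul_left M
    have hcauchy : CauchySeq h := by
      apply cauchySeq_of_dist_le_of_summable _ _ hsummable
      intro j
      rw [Real.dist_eq, abs_sub_comm]
      exact hstep j
    obtain ⟨l, hl⟩ := cauchySeq_tendsto_of_complete hcauchy
    set a := Real.exp l with hadef
    have ha0 : 0 < a := Real.exp_pos l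
    have hgh : ∀ j, g j = Real.exp (h j) := fun j => (Real.exp_log (hg_pos j)).symm
    have htail : ∀ J : ℕ, 1 ≤ J → |h J - l| ≤ (2*M/s) * ((J:ℝ)+1)^(-s) := by
      intro J hJ
      have hbd : ∀ m, J ≤ m → dist (h J) (h m) ≤ (2*M/s) * ((J:ℝ)+1)^(-s) := by
        intro m hm
        calc dist (h J) (h m) ≤ ∑ j ∈ Finset.Ico J m, dist (h j) (h (j+1)) :=
              dist_le_Ico_sum_dist h hm
          _ ≤ ∑ j ∈ Finset.Ico J m, M * ((j:ℝ)+1)^(-(1:ℝ)-s) := by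
              apply Finset.sum_le_sum
              intro j _
              rw [Real.dist_eq, abs_sub_comm]
              exact hstep j
          _ = M * ∑ j ∈ Finset.Ico J m, ((j:ℝ)+1)^(-(1:ℝ)-s) := by
              rw [Finset.mul_sum]
          _ ≤ M * ((2/s) * ((J:ℝ)+1)^(-s)) :=
              mul_le_mul_of_nonneg_left (aux_sum hs0 hs1 J m hJ) hM0.le
          _ = (2*M/s) * ((J:ℝ)+1)^(-s) := by ring
      have hdist : Filter.Tendsto (fun m => dist (h J) (h m)) Filter.atTop
          (nhds (dist (h J) l)) := Filter.Tendsto.dist tendsto_const_nhds hl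
      have := le_of_tendsto hdist (Filter.eventually_atTop.mpr ⟨J, hbd⟩)
      rwa [Real.dist_eq] at this
    -- Step D : choice of J₀ and bound on g
    set J₀ : ℕ := max 1 ⌈(4*M/s)^(s⁻¹)⌉₊ with hJ₀def
    have hJ₀1 : 1 ≤ J₀ := le_max_left _ _
    have hJ₀small : ∀ J : ℕ, J₀ ≤ J → (2*M/s) * ((J:ℝ)+1)^(-s) ≤ 1/2 := by
      intro J hJ
      have hq0 : (0:ℝ) ≤ 4*M/s := by positivity
      have hcile : (4*M/s)^(s⁻¹) ≤ (J:ℝ)+1 := by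
        have h1 : (⌈(4*M/s)^(s⁻¹)⌉₊:ℝ) ≤ (J:ℝ) := by
          exact_mod_cast le_trans (le_max_right _ _) hJ
        linarith [Nat.le_ceil ((4*M/s)^(s⁻¹))]
      have hJs : 4*M/s ≤ ((J:ℝ)+1)^s := by
        calc 4*M/s = ((4*M/s)^(s⁻¹))^s := (Real.rpow_inv_rpow hq0 (ne_of_gt hs0)).symm
          _ ≤ ((J:ℝ)+1)^s := Real.rpow_le_rpow (Real.rpow_nonneg hq0 _) hcile hs0.le
      have hJneg : ((J:ℝ)+1)^(-s) = (((J:ℝ)+1)^s)⁻¹ := Real.rpow_neg (by positivity) s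
      have h4M : (0:ℝ) < 4*M/s := by positivity
      have hinv : (((J:ℝ)+1)^s)⁻¹ ≤ (4*M/s)⁻¹ := inv_anti₀ h4M hJs
      calc (2*M/s) * ((J:ℝ)+1)^(-s) ≤ (2*M/s) * (4*M/s)⁻¹ := by
            rw [hJneg]
            apply mul_le_mul_of_nonneg_left hinv (by positivity)
        _ = 1/2 * ((M/s) * (s/M)) := by field_simp; ring
        _ ≤ 1/2 := by
            rw [show (M/s) * (s/M) = 1 by field_simp]
            norm_num
    have hgbound : ∀ J : ℕ, J₀ ≤ J →
        |g J - a| ≤ (4*M/s)*a*((J:ℝ)+1)^(-s) ∧ g J ≤ 2*a := by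
      intro J hJ
      have hJ1 : 1 ≤ J := le_trans hJ₀1 hJ
      have ht := htail J hJ1
      have thalf : |h J - l| ≤ 1/2 := le_trans ht (hJ₀small J hJ)
      have hgd : g J - a = a * (Real.exp (h J - l) - 1) := by
        rw [hgh J, hadef, mul_sub, mul_one, ← Real.exp_add]
        ring_nf
      have hexp := aux_expm1 thalf
      have key : |g J - a| ≤ a * (2 * |h J - l|) := by
        rw [hgd, abs_mul, abs_of_pos ha0]
        exact mul_le_mul_of_nonneg_left hexp ha0.le
      constructor
      · calc |g J - a| ≤ a * (2 * |h J - l|) := key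
          _ ≤ a * (2 * ((2*M/s) * ((J:ℝ)+1)^(-s))) := by
              apply mul_le_mul_of_nonneg_left _ ha0.le
              linarith
          _ = (4*M/s)*a*((J:ℝ)+1)^(-s) := by ring
      · have h1 : |g J - a| ≤ a := by
          calc |g J - a| ≤ a * (2 * |h J - l|) := key
            _ ≤ a * (2 * (1/2)) := by
                apply mul_le_mul_of_nonneg_left _ ha0.le
                linarith
            _ = a := by ring
        have := (abs_le.mp h1).2
        linarith
    -- Step E : final assembly
    refine ⟨a, ha0, 8*a*C₁ + (8*M/s)*a*(L₀+β) + 2*a*β, by positivity, n₀ * 2^(J₀+1), ?_⟩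
    intro n hn
    have hn₀n : n₀ ≤ n := by
      calc n₀ = n₀ * 1 := (mul_one n₀).symm
        _ ≤ n₀ * 2^(J₀+1) := Nat.mul_le_mul_left n₀ Nat.one_le_two_pow
        _ ≤ n := hn
    have hn0 : 0 < n := lt_of_lt_of_le hn₀1 hn₀n
    set m := n / n₀ with hmdef
    have hm1 : 1 ≤ m := (Nat.one_le_div_iff (by omega)).mpr hn₀n
    set J := Nat.log 2 m with hJdef
    have h2J : 2^J ≤ m := Nat.pow_log_le_self 2 (by omega)
    have h2J' : m + 1 ≤ 2^(J+1) := Nat.lt_pow_succ_log_self (by norm_num) m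
    have hlow : nn J ≤ n := by
      have h1 : n₀ * 2^J ≤ n₀ * m := Nat.mul_le_mul_left n₀ h2J
      have h2 : n₀ * m ≤ n := by
        rw [hmdef, mul_comm]; exact Nat.div_mul_le_self n n₀
      exact le_trans h1 h2
    have hup : n ≤ 2 * nn J := by
      have hr : n₀ * m + n % n₀ = n := by rw [hmdef]; exact Nat.div_add_mod n n₀
      have hmod : n % n₀ < n₀ := Nat.mod_lt n (by omega)
      have h1 : n < n₀ * (m+1) := by
        have h1a : n₀ * m + n % n₀ < n₀ * m + n₀ := Nat.add_lt_add_left hmod _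
        rw [hr] at h1a
        rw [Nat.mul_succ]
        exact h1a
      have h2 : n₀ * (m+1) ≤ n₀ * 2^(J+1) := Nat.mul_le_mul_left n₀ h2J'
      have h3 : n₀ * 2^(J+1) = 2 * nn J := by simp only [hnn]; rw [pow_succ]; ring
      omega
    have hJ₀J : J₀ ≤ J := by
      have h1 : n₀ * 2^(J₀+1) ≤ 2 * nn J := le_trans hn hup
      have h2 : 2 * nn J = n₀ * 2^(J+1) := by simp only [hnn]; rw [pow_succ]; ring
      rw [h2] at h1
      have h3 : 2^(J₀+1) ≤ 2^(J+1) := Nat.le_of_mul_le_mul_left h1 (by omega)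
      have h4 := (Nat.pow_le_pow_iff_right (by norm_num : 1 < 2)).mp h3
      omega
    -- real-number facts
    have hψJ : (0:ℝ) < ψ (nn J) := hpos _
    have hℓLJ : LL J ≤ Real.log n := by
      apply Real.log_le_log (by exact_mod_cast hnn_pos J)
      exact_mod_cast hlow
    have hℓup : Real.log n ≤ LL J + β := by
      have h1 : Real.log n ≤ Real.log ((2 * nn J : ℕ):ℝ) := by
        apply Real.log_le_log (by exact_mod_cast hn0)
        exact_mod_cast hup
      have h2 : Real.log ((2 * nn J : ℕ):ℝ) = β + LL J := by
        push_cast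
        rw [Real.log_mul (by norm_num) (by
          have := hnn_pos J; positivity)]
      linarith only [h1, h2.le, h2.ge]
    set ℓ := Real.log (n:ℝ) with hℓdef
    have hℓ3 : (3:ℝ) ≤ ℓ := le_trans (le_trans hL₀3 (hLL_ge J)) hℓLJ
    have hℓ1 : (1:ℝ) ≤ ℓ := by linarith only [hℓ3]
    have hℓ0 : (0:ℝ) < ℓ := by linarith only [hℓ3]
    have hLJhalf : ℓ/2 ≤ LL J := by
      linarith only [hℓup, hβ1, hℓ3]
    set u := Real.sqrt (LL J) with hudef
    set v := Real.sqrt ℓ with hvdef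
    have hu0 : (0:ℝ) < u := Real.sqrt_pos.mpr (hLL0 J)
    have hv0 : (0:ℝ) < v := Real.sqrt_pos.mpr hℓ0
    have hu2 : u^2 = LL J := Real.sq_sqrt (hLL0 J).le
    have hv2 : v^2 = ℓ := Real.sq_sqrt hℓ0.le
    have huv : u ≤ v := Real.sqrt_le_sqrt hℓLJ
    have hu1 : (1:ℝ) ≤ u := by
      rw [show (1:ℝ) = Real.sqrt 1 by rw [Real.sqrt_one], hudef]
      exact Real.sqrt_le_sqrt (hLL1 J)
    have hv2u : v ≤ 2*u := by
      have hℓ4 : ℓ ≤ 4 * LL J := by linarith only [hLJhalf, hLL0 J]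
      calc v = Real.sqrt ℓ := hvdef
        _ ≤ Real.sqrt (4 * LL J) := Real.sqrt_le_sqrt hℓ4
        _ = Real.sqrt 4 * Real.sqrt (LL J) := Real.sqrt_mul (by norm_num) _
        _ = 2*u := by
            rw [show (4:ℝ) = 2^2 by norm_num, Real.sqrt_sq (by norm_num), hudef]
    have e1' : |ψ n - ψ (nn J)| ≤ C₁ * ψ (nn J) * (LL J) ^ (-c) :=
      hI (nn J) (le_trans (le_trans (le_max_left _ _) (le_max_left _ _)) (hnn_ge J)) n hlow hup
    have hgJa := hgbound J hJ₀J
    have hψnnJ : ψ (nn J) = g J * u⁻¹ := by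
      have hgJ : g J = ψ (nn J) * u := rfl
      rw [hgJ]
      field_simp
    have hψb : ψ (nn J) ≤ 2*a*u⁻¹ := by
      rw [hψnnJ]
      exact mul_le_mul_of_nonneg_right hgJa.2 (inv_nonneg.mpr hu0.le)
    have huinv : u⁻¹ ≤ 2*v⁻¹ := by
      rw [inv_eq_one_div, show 2*v⁻¹ = 2/v by rw [inv_eq_one_div]; ring,
        div_le_div_iff₀ hu0 hv0]
      linarith only [hv2u]
    have hLJc : (LL J) ^ (-c) ≤ 2 * ℓ^(-δ) := by
      have hhalfpos : (0:ℝ) < ℓ/2 := by linarith only [hℓ3]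
      have b1 : (LL J)^(-c) ≤ (ℓ/2)^(-c) :=
        Real.rpow_le_rpow_of_nonpos hhalfpos hLJhalf (by linarith only [hc])
      have b2 : (ℓ/2)^(-c) = ℓ^(-c) / (2:ℝ)^(-c) := Real.div_rpow hℓ0.le (by norm_num) _
      have b3 : ((2:ℝ))^(-c) = ((2:ℝ)^c)⁻¹ := Real.rpow_neg (by norm_num) c
      have b4 : (2:ℝ)^c ≤ 2 := by
        calc (2:ℝ)^c ≤ (2:ℝ)^(1:ℝ) :=
              Real.rpow_le_rpow_of_exponent_le one_le_two hc1
          _ = 2 := Real.rpow_one 2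
      have b5 : ℓ^(-c) ≤ ℓ^(-δ) := Real.rpow_le_rpow_of_exponent_le hℓ1 (by linarith only [hδc])
      calc (LL J)^(-c) ≤ (ℓ/2)^(-c) := b1
        _ = ℓ^(-c) * (2:ℝ)^c := by rw [b2, b3, div_inv_eq_mul]
        _ ≤ ℓ^(-δ) * 2 := mul_le_mul b5 b4 (by positivity) (by positivity)
        _ = 2 * ℓ^(-δ) := by ring
    have hJsb : ((J:ℝ)+1)^(-s) ≤ (L₀+β) * ℓ^(-δ) := by
      have hLβ1 : (1:ℝ) ≤ L₀+β := by linarith only [hL₀1, hβ0]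
      have hLβ0 : (0:ℝ) < L₀+β := by linarith only [hL₀1, hβ0]
      have hℓJ : ℓ ≤ ((J:ℝ)+1)*(L₀+β) := by
        have h1 : ℓ ≤ LL J + β := hℓup
        rw [hLL_eq] at h1
        have hj0 : (0:ℝ) ≤ (J:ℝ) := Nat.cast_nonneg J
        nlinarith only [h1, mul_nonneg hj0 (by linarith only [hL₀1] : (0:ℝ) ≤ L₀)]
      have b1 : (((J:ℝ))+1)^(-s) ≤ (ℓ/(L₀+β))^(-s) := by
        apply Real.rpow_le_rpow_of_nonpos (by positivity) _ (by linarith only [hs0])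
        rw [div_le_iff₀ hLβ0]
        exact hℓJ
      have b2 : (ℓ/(L₀+β))^(-s) = ℓ^(-s) / (L₀+β)^(-s) := Real.div_rpow hℓ0.le hLβ0.le _
      have b3 : (L₀+β)^(-s) = ((L₀+β)^s)⁻¹ := Real.rpow_neg hLβ0.le s
      have b4 : (L₀+β)^s ≤ L₀+β := by
        calc (L₀+β)^s ≤ (L₀+β)^(1:ℝ) := Real.rpow_le_rpow_of_exponent_le hLβ1 hs1
          _ = L₀+β := Real.rpow_one _
      have b5 : ℓ^(-s) ≤ ℓ^(-δ) := Real.rpow_le_rpow_of_exponent_le hℓ1 (by linarith only [hδs])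
      calc ((J:ℝ)+1)^(-s) ≤ (ℓ/(L₀+β))^(-s) := b1
        _ = ℓ^(-s) * (L₀+β)^s := by rw [b2, b3, div_inv_eq_mul]
        _ ≤ ℓ^(-δ) * (L₀+β) := mul_le_mul b5 b4 (by positivity) (by positivity)
        _ = (L₀+β) * ℓ^(-δ) := by ring
    have hℓinv : ℓ⁻¹ ≤ ℓ^(-δ) := by
      rw [← Real.rpow_neg_one ℓ]
      exact Real.rpow_le_rpow_of_exponent_le hℓ1 (by linarith only [hδ1])
    have hvinv : ℓ ^ (-(1:ℝ)/2) = v⁻¹ := by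
      rw [show (-(1:ℝ)/2) = -(1/2:ℝ) by norm_num, Real.rpow_neg hℓ0.le,
        hvdef, Real.sqrt_eq_rpow]
    have hT1 : |ψ n - ψ (nn J)| ≤ 8*a*C₁ * (v⁻¹ * ℓ^(-δ)) := by
      calc |ψ n - ψ (nn J)| ≤ C₁ * ψ (nn J) * (LL J)^(-c) := e1'
        _ ≤ C₁ * (2*a*(2*v⁻¹)) * (2 * ℓ^(-δ)) := by
            apply mul_le_mul _ hLJc (by positivity) (by positivity)
            apply mul_le_mul_of_nonneg_left _ hC₁.le
            calc ψ (nn J) ≤ 2*a*u⁻¹ := hψb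
              _ ≤ 2*a*(2*v⁻¹) := by
                  apply mul_le_mul_of_nonneg_left huinv (by positivity)
        _ = 8*a*C₁ * (v⁻¹ * ℓ^(-δ)) := by ring
    have hT2 : |ψ (nn J) - a * u⁻¹| ≤ (8*M/s)*a*(L₀+β) * (v⁻¹ * ℓ^(-δ)) := by
      have heq : ψ (nn J) - a * u⁻¹ = (g J - a) * u⁻¹ := by rw [hψnnJ]; ring
      rw [heq, abs_mul, abs_of_pos (inv_pos.mpr hu0)]
      calc |g J - a| * u⁻¹ ≤ ((4*M/s)*a*((J:ℝ)+1)^(-s)) * u⁻¹ :=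
            mul_le_mul_of_nonneg_right hgJa.1 (by positivity)
        _ ≤ ((4*M/s)*a*((L₀+β) * ℓ^(-δ))) * (2*v⁻¹) := by
            apply mul_le_mul _ huinv (by positivity) (by positivity)
            apply mul_le_mul_of_nonneg_left hJsb (by positivity)
        _ = (8*M/s)*a*(L₀+β) * (v⁻¹ * ℓ^(-δ)) := by ring
    have hT3 : a * (u⁻¹ - v⁻¹) ≤ 2*a*β * (v⁻¹ * ℓ^(-δ)) := by
      have hdiffb : v^2 - u^2 ≤ β := by rw [hu2, hv2]; linarith only [hℓup]
      have hdi := aux_diff_inv hu1 huv hv2u hβ0 hdiffb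
      have hv2ℓ : (v^2)⁻¹ = ℓ⁻¹ := by rw [hv2]
      calc a * (u⁻¹ - v⁻¹) ≤ a * (2*β*(v⁻¹ * ℓ⁻¹)) := by
            apply mul_le_mul_of_nonneg_left _ ha0.le
            rw [← hv2ℓ]; exact hdi
        _ ≤ a * (2*β*(v⁻¹ * ℓ^(-δ))) := by
            apply mul_le_mul_of_nonneg_left _ ha0.le
            apply mul_le_mul_of_nonneg_left _ (by positivity)
            apply mul_le_mul_of_nonneg_left hℓinv (by positivity)
        _ = 2*a*β * (v⁻¹ * ℓ^(-δ)) := by ring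
    have hvu_inv : v⁻¹ ≤ u⁻¹ := inv_anti₀ hu0 huv
    have htri : |ψ n - a * ℓ^(-(1:ℝ)/2)| ≤
        |ψ n - ψ (nn J)| + |ψ (nn J) - a*u⁻¹| + a*(u⁻¹ - v⁻¹) := by
      rw [hvinv]
      have h3 : |a*u⁻¹ - a*v⁻¹| = a*(u⁻¹ - v⁻¹) := by
        rw [show a*u⁻¹ - a*v⁻¹ = a*(u⁻¹-v⁻¹) by ring]
        exact abs_of_nonneg (mul_nonneg ha0.le (by linarith only [hvu_inv]))
      calc |ψ n - a*v⁻¹| ≤ |ψ n - ψ (nn J)| + |ψ (nn J) - a*v⁻¹| := abs_sub_le _ _ _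
        _ ≤ |ψ n - ψ (nn J)| + (|ψ (nn J) - a*u⁻¹| + |a*u⁻¹ - a*v⁻¹|) :=
            add_le_add le_rfl (abs_sub_le _ _ _)
        _ = |ψ n - ψ (nn J)| + |ψ (nn J) - a*u⁻¹| + a*(u⁻¹ - v⁻¹) := by
            rw [h3]; ring
    have hfinal : |ψ n - a * ℓ^(-(1:ℝ)/2)| ≤
        (8*a*C₁ + (8*M/s)*a*(L₀+β) + 2*a*β) * (v⁻¹ * ℓ^(-δ)) := by
      calc |ψ n - a * ℓ^(-(1:ℝ)/2)| ≤
          |ψ n - ψ (nn J)| + |ψ (nn J) - a*u⁻¹| + a*(u⁻¹ - v⁻¹) := htri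
        _ ≤ 8*a*C₁ * (v⁻¹ * ℓ^(-δ)) + (8*M/s)*a*(L₀+β) * (v⁻¹ * ℓ^(-δ))
            + 2*a*β * (v⁻¹ * ℓ^(-δ)) := by
            exact add_le_add (add_le_add hT1 hT2) hT3
        _ = (8*a*C₁ + (8*M/s)*a*(L₀+β) + 2*a*β) * (v⁻¹ * ℓ^(-δ)) := by ring
    calc |ψ n - a * ℓ^(-(1:ℝ)/2)| ≤
        (8*a*C₁ + (8*M/s)*a*(L₀+β) + 2*a*β) * (v⁻¹ * ℓ^(-δ)) := hfinal
      _ = (8*a*C₁ + (8*M/s)*a*(L₀+β) + 2*a*β) * ℓ^(-(1:ℝ)/2) * ℓ^(-δ) := by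
          rw [hvinv]; ring
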